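/- Let V be a unital commutative associative ℂ-algebra with a trace str, and let A be a differential operator of order at most l on V. Then for all f_1,…,f_l ∈ V one has str(⟨f_1,…,f_l⟩_l^A · (−)) = 0, i.e. the trace of the operator of multiplication by the Koszul bracket ⟨f_1,…,f_l⟩_l^A vanishes. -/
import Mathlib


/-- The Koszul bracket hierarchy of an operator `D` on a commutative algebra:
`⟨f⟩₁ = D f` and
`⟨f₁,…,f_{l+1}⟩_{l+1} = ⟨f₁,…,f_{l-1},f_l·f_{l+1}⟩_l − ⟨f₁,…,f_l⟩_l·f_{l+1} − f_l·⟨f₁,…,f_{l-1},f_{l+1}⟩_l`. -/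
def koszul {V : Type*} [CommRing V] (D : V → V) : (l : ℕ) → (Fin l → V) → V
  | 0, _ => 0
  | 1, f => D (f 0)
  | l + 2, f =>
      koszul D (l + 1)
        (Fin.snoc (fun i : Fin l => f i.castSucc.castSucc)
          (f ⟨l, by omega⟩ * f ⟨l + 1, by omega⟩))
      - koszul D (l + 1) (fun i => f i.castSucc) * f ⟨l + 1, by omega⟩
      - f ⟨l, by omega⟩ *
          koszul D (l + 1)
            (Fin.snoc (fun i : Fin l => f i.castSucc.castSucc) (f ⟨l + 1, by omega⟩))

/-- `D` is a differential operator of order at most `l` if the `(l+1)`-st Koszul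
bracket vanishes identically. -/
def IsDiffOpOfOrderAtMost {V : Type*} [CommRing V] (D : V → V) (l : ℕ) : Prop :=
  ∀ f : Fin (l + 1) → V, koszul D (l + 1) f = 0


/-- Iterated commutator of `A` with multiplication operators. -/
def PhiOp {V : Type*} [CommRing V] [Algebra ℂ V] (A : V →ₗ[ℂ] V) :
    (l : ℕ) → (Fin l → V) → (V →ₗ[ℂ] V)
  | 0, _ => A
  | l + 1, f =>
      PhiOp A l (fun i => f i.castSucc) ∘ₗ LinearMap.mulLeft ℂ (f (Fin.last l))
        - LinearMap.mulLeft ℂ (f (Fin.last l)) ∘ₗ PhiOp A l (fun i => f i.castSucc)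

lemma koszul_succ_succ {V : Type*} [CommRing V] (D : V → V) (l : ℕ)
    (f : Fin (l + 1) → V) (g : V) :
    koszul D (l + 2) (Fin.snoc f g) =
      koszul D (l + 1)
        (Fin.snoc (fun i : Fin l => f i.castSucc) (f (Fin.last l) * g))
      - koszul D (l + 1) f * g
      - f (Fin.last l) *
          koszul D (l + 1) (Fin.snoc (fun i : Fin l => f i.castSucc) g) := by
  have h1 : (⟨l + 1, by omega⟩ : Fin (l + 2)) = Fin.last (l + 1) := rfl
  have h2 : (⟨l, by omega⟩ : Fin (l + 2)) = Fin.castSucc (Fin.last l) := rfl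
  show koszul D (l+1) _ - koszul D (l+1) _ * _ - _ * koszul D (l+1) _ = _
  rw [h1, h2]
  simp only [Fin.snoc_last, Fin.snoc_castSucc]

lemma phiOp_apply {V : Type*} [CommRing V] [Algebra ℂ V] (A : V →ₗ[ℂ] V) :
    ∀ (l : ℕ) (f : Fin l → V) (g : V),
      PhiOp A l f g = koszul (⇑A) (l + 1) (Fin.snoc f g) + g * koszul (⇑A) l f := by
  intro l
  induction l with
  | zero =>
    intro f g
    simp [PhiOp, koszul, Fin.snoc]
  | succ l ih =>
    intro f g
    have hP : PhiOp A (l + 1) f g =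
        PhiOp A l (fun i => f i.castSucc) (f (Fin.last l) * g)
          - f (Fin.last l) * PhiOp A l (fun i => f i.castSucc) g := by
      simp [PhiOp]
    rw [hP, ih, ih, koszul_succ_succ]
    ring

/-- If `V` carries a trace `str` (a linear functional on `End(V)` vanishing on
commutators) and `A` is a differential operator of order at most `l`, then
`str(⟨f₁,…,f_l⟩_l^A · (−)) = 0`. -/
theorem trace_koszul_mulLeft_eq_zero {V : Type*} [CommRing V] [Algebra ℂ V]
    (str : Module.End ℂ V →ₗ[ℂ] ℂ)
    (hstr : ∀ P Q : Module.End ℂ V, str (P ∘ₗ Q) = str (Q ∘ₗ P))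
    (A : V →ₗ[ℂ] V) (l : ℕ) (hA : IsDiffOpOfOrderAtMost (⇑A) l)
    (f : Fin l → V) :
    str (LinearMap.mulLeft ℂ (koszul (⇑A) l f)) = 0 := by
  cases l with
  | zero =>
    have : koszul (⇑A) 0 f = 0 := rfl
    rw [this, LinearMap.mulLeft_zero_eq_zero, map_zero]
  | succ k =>
    have hPhi : PhiOp A (k + 1) f = LinearMap.mulLeft ℂ (koszul (⇑A) (k + 1) f) := by
      ext g
      rw [LinearMap.mulLeft_apply, phiOp_apply, hA (Fin.snoc f g), zero_add, mul_comm]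
    rw [← hPhi]
    show str (_ ∘ₗ _ - _ ∘ₗ _) = 0
    rw [map_sub, hstr, sub_self]
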